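/- Maximizing expected reward is invariant to constant feature shifts, but risk-averse (worst-case) planning is not: (a) for any finite posterior sample {w₁,…,w_k} ⊆ ℝⁿ with mean w̄, and any φ₀ ∈ ℝⁿ, argmax_{ξ∈Ξ} w̄ᵀ(φ(ξ)+φ₀) = argmax_{ξ∈Ξ} w̄ᵀφ(ξ); (b) there exist n, a two-element trajectory set Ξ = {ξ₁, ξ₂}, feature map φ, a finite set of weights, and a shift φ₀ such that argmax_ξ min_i w_iᵀφ(ξ) ≠ argmax_ξ min_i w_iᵀ(φ(ξ)+φ₀). -/

import Mathlib

/-!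
Under the mean weights `w̄` a shift `φ₀` adds the same constant `w̄ ⬝ᵥ φ₀` to every objective value,
so the maximizers do not move. Under the worst case `minⱼ wⱼ ⬝ᵥ φ(ξ)` the shift adds `wⱼ ⬝ᵥ φ₀`,
which depends on `j`, so it can change which weight vector is worst and hence the maximizer: with
the one-dimensional weights `1, -1`, features `0, 1` and shift `-2`, the worst-case values `0, -1`
become `-2, -1`.
-/

def argmaxSet {α β : Type*} [LE β] (f : α → β) : Set α := {x | ∀ y, f y ≤ f x}

def worstCaseReward {κ ι R : Type*} [Fintype ι] [Mul R] [AddCommMonoid R] [InfSet R]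
    (ws : κ → ι → R) (ψ : ι → R) : R :=
  ⨅ j, ws j ⬝ᵥ ψ

section argmaxSet

variable {α β : Type*}

lemma argmaxSet_add_const [LE β] [Add β] [AddRightMono β] [AddRightReflectLE β]
    (f : α → β) (c : β) : argmaxSet (fun x => f x + c) = argmaxSet f := by
  ext x
  simp only [argmaxSet, Set.mem_ofPred_eq, add_le_add_iff_right]

lemma argmaxSet_ne_of_mem_of_lt [Preorder β] {f g : α → β} {x y : α}
    (hx : x ∈ argmaxSet f) (hxy : g x < g y) : argmaxSet f ≠ argmaxSet g := by
  intro h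
  rw [h] at hx
  exact hxy.not_ge (hx y)

end argmaxSet

lemma argmaxSet_dotProduct_add {α ι R : Type*} [Fintype ι] [NonUnitalNonAssocSemiring R]
    [PartialOrder R] [IsOrderedCancelAddMonoid R] (w : ι → R) (φ : α → ι → R) (φ₀ : ι → R) :
    argmaxSet (fun ξ => w ⬝ᵥ (φ ξ + φ₀)) = argmaxSet (fun ξ => w ⬝ᵥ φ ξ) := by
  simp only [dotProduct_add]
  exact argmaxSet_add_const _ _

lemma ciInf_fin_two {α : Type*} [ConditionallyCompleteLattice α] (f : Fin 2 → α) :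
    ⨅ i, f i = f 0 ⊓ f 1 := by
  rw [← Finset.inf'_univ_eq_ciInf]
  simp [Fin.univ_succ]

lemma argmaxSet_worstCaseReward_ne_shift :
    argmaxSet (fun ξ => worstCaseReward ![![(1 : ℝ)], ![-1]] (![![0], ![1]] ξ)) ≠
      argmaxSet (fun ξ => worstCaseReward ![![(1 : ℝ)], ![-1]] (![![0], ![1]] ξ + ![-2])) := by
  refine argmaxSet_ne_of_mem_of_lt (x := 0) (y := 1) ?_ ?_
  · intro ξ
    fin_cases ξ <;> norm_num [worstCaseReward, ciInf_fin_two]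
  · norm_num [worstCaseReward, ciInf_fin_two]

theorem mean_shift_invariant_worst_case_not_general
    {n : ℕ} {Ξ : Type*}
    (φ : Ξ → Fin n → ℝ) (wbar : Fin n → ℝ) (φ₀ : Fin n → ℝ) :
    -- (a) argmax under the mean weights is shift invariant
    ({ξ : Ξ | ∀ ξ' : Ξ, (∑ i, wbar i * (φ ξ' i + φ₀ i)) ≤ ∑ i, wbar i * (φ ξ i + φ₀ i)}
      = {ξ : Ξ | ∀ ξ' : Ξ, (∑ i, wbar i * φ ξ' i) ≤ ∑ i, wbar i * φ ξ i}) ∧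
    -- (b) there is a counterexample for worst-case planning
    (∃ (m : ℕ) (ψ : Fin 2 → Fin m → ℝ) (l : ℕ) (_ : 0 < l)
        (vs : Fin l → Fin m → ℝ) (ψ₀ : Fin m → ℝ),
      {ξ : Fin 2 | ∀ ξ' : Fin 2,
          (⨅ j : Fin l, ∑ i, vs j i * ψ ξ' i) ≤ ⨅ j : Fin l, ∑ i, vs j i * ψ ξ i}
      ≠ {ξ : Fin 2 | ∀ ξ' : Fin 2,
          (⨅ j : Fin l, ∑ i, vs j i * (ψ ξ' i + ψ₀ i)) ≤
            ⨅ j : Fin l, ∑ i, vs j i * (ψ ξ i + ψ₀ i)}) :=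
  ⟨argmaxSet_dotProduct_add wbar φ φ₀,
    ⟨1, _, 2, two_pos, _, _, argmaxSet_worstCaseReward_ne_shift⟩⟩

/-- (a) Maximizing the mean reward is invariant to constant
feature shifts; (b) worst-case (risk-averse) planning is not. -/
theorem mean_shift_invariant_worst_case_not
    {n : ℕ} {Ξ : Type*} [Fintype Ξ] [Nonempty Ξ]
    (φ : Ξ → Fin n → ℝ) (k : ℕ) (hk : 0 < k)
    (ws : Fin k → Fin n → ℝ) (wbar : Fin n → ℝ)
    (hbar : wbar = fun i => (∑ j, ws j i) / k) (φ₀ : Fin n → ℝ) :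
    -- (a) argmax under the mean weights is shift invariant
    ({ξ : Ξ | ∀ ξ' : Ξ, (∑ i, wbar i * (φ ξ' i + φ₀ i)) ≤ ∑ i, wbar i * (φ ξ i + φ₀ i)}
      = {ξ : Ξ | ∀ ξ' : Ξ, (∑ i, wbar i * φ ξ' i) ≤ ∑ i, wbar i * φ ξ i}) ∧
    -- (b) there is a counterexample for worst-case planning
    (∃ (m : ℕ) (ψ : Fin 2 → Fin m → ℝ) (l : ℕ) (_ : 0 < l)
        (vs : Fin l → Fin m → ℝ) (ψ₀ : Fin m → ℝ),
      {ξ : Fin 2 | ∀ ξ' : Fin 2,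
          (⨅ j : Fin l, ∑ i, vs j i * ψ ξ' i) ≤ ⨅ j : Fin l, ∑ i, vs j i * ψ ξ i}
      ≠ {ξ : Fin 2 | ∀ ξ' : Fin 2,
          (⨅ j : Fin l, ∑ i, vs j i * (ψ ξ' i + ψ₀ i)) ≤
            ⨅ j : Fin l, ∑ i, vs j i * (ψ ξ i + ψ₀ i)}) :=
  mean_shift_invariant_worst_case_not_general φ wbar φ₀
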